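/- arXiv:2205.00017 — 2 statements merged into one kernel-verified Lean document; each statement's English description precedes it below -/
import Mathlib

section
/- The 3×3 density matrix σ = (1/12)·[[4+√2, x₋, 2x₊],[x₋, 4-2√2, x₋],[2x₊, x₋, 4+√2]] with x₊ = (√2+1)/2 and x₋ = (√2-1)/2 is a valid density matrix (positive semidefinite, trace 1), and for the Hamiltonian H = diag(0,1,2) its inverse virtual temperatures for the adjacent pairs (0,1) and (1,2) are ±log(5/2 + 3/√2): specifically β_{01} = log((4+√2)/(4-2√2)) = log(5/2 + 3/√2) and β_{12} = -log(5/2 + 3/√2). -/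
/-!
Up to the factor `1/12` the state has the form `[[a, b, c], [b, d, b], [c, b, a]]`, symmetric
under reversing the basis, and such a matrix equals
`(a - c)/2 · vvᵀ + (a + c)/2 · wwᵀ + (d - 2b²/(a + c)) · e₁e₁ᵀ` with `v = (1, 0, -1)` and
`w = (1, 2b/(a + c), 1)`; here all three coefficients are nonnegative. The diagonal satisfies
`p₂ = p₀`, so `β₁₂ = -β₀₁`, and `(4 + √2)/(4 - 2√2) = 5/2 + 3/√2` is a rationalization.
-/

open scoped ComplexOrder
open Matrix

theorem posSemidef_of_persymmetric_fin_three {a b c d : ℝ} (hca : c ≤ a) (hac : 0 < a + c)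
    (hb : 2 * b ^ 2 ≤ (a + c) * d) :
    (Matrix.of ![![(a : ℂ), b, c], ![(b : ℂ), d, b], ![(c : ℂ), b, a]]).PosSemidef := by
  set s : ℝ := 2 * b / (a + c) with hs
  set e : ℝ := d - 2 * b ^ 2 / (a + c) with he
  have hsb : (a + c) / 2 * s = b := by rw [hs]; field_simp
  have hsd : (a + c) / 2 * (s * s) + e = d := by rw [hs, he]; field_simp; ring
  have hdecomp : Matrix.of ![![(a : ℂ), b, c], ![(b : ℂ), d, b], ![(c : ℂ), b, a]] =
      ((a - c) / 2) • vecMulVec ![1, 0, -1] (star ![1, 0, -1]) +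
      ((a + c) / 2) • vecMulVec ![1, (s : ℂ), 1] (star ![1, (s : ℂ), 1]) +
      e • vecMulVec ![0, 1, 0] (star ![(0 : ℂ), 1, 0]) := by
    ext i j
    simp only [Matrix.add_apply, Matrix.smul_apply, vecMulVec_apply, of_apply, Pi.star_apply]
    fin_cases i <;> fin_cases j <;> simp [Complex.ext_iff, hsb, hsd] <;> ring
  rw [hdecomp]
  refine (((posSemidef_vecMulVec_self_star _).smul ?_).add
    ((posSemidef_vecMulVec_self_star _).smul ?_)).add ((posSemidef_vecMulVec_self_star _).smul ?_)
  · linarith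
  · linarith
  · rw [he, sub_nonneg, div_le_iff₀ hac]
    linarith

theorem four_add_sqrt_two_div_four_sub_two_mul_sqrt_two :
    (4 + √2) / (4 - 2 * √2) = 5 / 2 + 3 / √2 := by
  have h2 : √2 ^ 2 = 2 := Real.sq_sqrt zero_le_two
  have hden : 4 - 2 * √2 ≠ 0 := by nlinarith
  rw [div_eq_iff hden]
  field_simp
  linear_combination 12 * h2

/-- The preprocessed qutrit state `σ = (1/12)[[4+√2, x₋, 2x₊],[x₋, 4-2√2, x₋],[2x₊, x₋, 4+√2]]`
with `x₊ = (√2+1)/2`, `x₋ = (√2-1)/2` is a valid density matrix, and for `H = diag(0,1,2)`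
its adjacent inverse virtual temperatures are
`β₀₁ = log((4+√2)/(4-2√2)) = log(5/2 + 3/√2)` and `β₁₂ = -log(5/2 + 3/√2)`. -/
theorem preprocessed_qutrit_virtual_temperatures
    (xp xm : ℝ) (hxp : xp = (Real.sqrt 2 + 1) / 2) (hxm : xm = (Real.sqrt 2 - 1) / 2)
    (σ : Matrix (Fin 3) (Fin 3) ℂ)
    (hσ : σ = (1 / 12 : ℂ) •
      Matrix.of ![![((4 + Real.sqrt 2 : ℝ) : ℂ), (xm : ℂ), ((2 * xp : ℝ) : ℂ)],
                  ![(xm : ℂ), ((4 - 2 * Real.sqrt 2 : ℝ) : ℂ), (xm : ℂ)],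
                  ![((2 * xp : ℝ) : ℂ), (xm : ℂ), ((4 + Real.sqrt 2 : ℝ) : ℂ)]])
    (ε : Fin 3 → ℝ) (hε : ε = ![0, 1, 2]) :
    σ.PosSemidef ∧ σ.trace = 1 ∧
    Real.log ((σ 0 0).re / (σ 1 1).re) / (ε 1 - ε 0) =
      Real.log ((4 + Real.sqrt 2) / (4 - 2 * Real.sqrt 2)) ∧
    Real.log ((σ 0 0).re / (σ 1 1).re) / (ε 1 - ε 0) =
      Real.log (5 / 2 + 3 / Real.sqrt 2) ∧
    Real.log ((σ 1 1).re / (σ 2 2).re) / (ε 2 - ε 1) =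
      -Real.log (5 / 2 + 3 / Real.sqrt 2) := by
  have hpsd : σ.PosSemidef := by
    have h2 : √2 ^ 2 = 2 := Real.sq_sqrt zero_le_two
    rw [hσ]
    refine (posSemidef_of_persymmetric_fin_three ?_ ?_ ?_).smul (by positivity)
    all_goals subst hxp hxm; nlinarith [Real.sqrt_nonneg 2]
  have hβ₀₁ : Real.log ((σ 0 0).re / (σ 1 1).re) = Real.log ((4 + √2) / (4 - 2 * √2)) := by
    have hp₀ : (σ 0 0).re = 12⁻¹ * (4 + √2) := by simp [hσ]
    have hp₁ : (σ 1 1).re = 12⁻¹ * (4 - 2 * √2) := by simp [hσ]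
    rw [hp₀, hp₁, mul_div_mul_left _ _ (by norm_num)]
  have hp₂ : (σ 2 2).re = (σ 0 0).re := by simp [hσ]
  have hε₀₁ : ε 1 - ε 0 = 1 := by simp [hε]
  have hε₁₂ : ε 2 - ε 1 = 1 := by simp [hε]; norm_num
  refine ⟨hpsd, ?_, ?_, ?_, ?_⟩
  · simp [hσ, trace_fin_three]
    ring
  · rw [hε₀₁, div_one, hβ₀₁]
  · rw [hε₀₁, div_one, hβ₀₁, four_add_sqrt_two_div_four_sub_two_mul_sqrt_two]
  · rw [hε₁₂, div_one, hp₂, ← inv_div, Real.log_inv, hβ₀₁,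
      four_add_sqrt_two_div_four_sub_two_mul_sqrt_two]
end

section
/- For a d-level system with nonconstant energies ε and strictly positive probability vector p, the effective cold inverse temperature β_c := max_{i≠j, ε_i≠ε_j} β_{ij} and hot inverse temperature β_h := min_{i≠j, ε_i≠ε_j} β_{ij} (with β_{ij} = log(p_i/p_j)/(ε_j-ε_i)) satisfy β_h ≤ β*(E) ≤ β_c whenever β*(E) is the inverse temperature of the Gibbs state with the same average energy E = ∑ p_i ε_i. Equivalently T_c ≤ T* ≤ T_h in temperature form (for positive temperatures). -/
/-!
With Gibbs weights `q i = exp (-β * ε i)`, for `ε j < ε i` the inequality `β_{ij} < β` says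
exactly `p j * q i < p i * q j`: the ratio `p / q` increases with the energy. Every term of
`∑ i j, (p i q j - p j q i) (ε i - ε j)` is then nonnegative, and this sum is twice
`E Z - ∑ i, ε i q i` with `Z = ∑ i, q i`, so `E` exceeds the Gibbs energy at `β`. Hence `β*`
cannot lie above every `β_{ij}`, and symmetrically not below every one.
-/

open Finset Real

theorem sum_sum_cross_mul_sub_eq {ι : Type*} [Fintype ι] (p q ε : ι → ℝ) :
    ∑ i, ∑ j, (p i * q j - p j * q i) * (ε i - ε j) =
      2 * ((∑ i, ε i * p i) * ∑ i, q i - (∑ i, p i) * ∑ i, ε i * q i) := by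
  have expand : ∀ i j, (p i * q j - p j * q i) * (ε i - ε j) =
      ε i * p i * q j + ε j * p j * q i - p i * (ε j * q j) - ε i * q i * p j := fun i j => by
    ring
  simp only [expand, sum_add_distrib, sum_sub_distrib, ← mul_sum, ← sum_mul]
  ring

theorem sum_mul_sum_lt_of_ratio_strictMono {ι : Type*} [Fintype ι] {p q ε : ι → ℝ}
    (hε : ∃ i j, ε i ≠ ε j) (hpq : ∀ i j, ε j < ε i → p j * q i < p i * q j) :
    (∑ i, p i) * ∑ i, ε i * q i < (∑ i, ε i * p i) * ∑ i, q i := by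
  have cross_pos : ∀ i j, ε i ≠ ε j → 0 < (p i * q j - p j * q i) * (ε i - ε j) := by
    intro i j hij
    rcases hij.lt_or_gt with hlt | hgt
    · exact mul_pos_of_neg_of_neg (by linarith [hpq j i hlt]) (sub_neg.mpr hlt)
    · exact mul_pos (by linarith [hpq i j hgt]) (sub_pos.mpr hgt)
  have cross_nonneg : ∀ i j, 0 ≤ (p i * q j - p j * q i) * (ε i - ε j) := by
    intro i j
    by_cases hij : ε i = ε j
    · simp [hij]
    · exact (cross_pos i j hij).le
  obtain ⟨i₀, j₀, hij₀⟩ := hε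
  have hsum : 0 < ∑ i, ∑ j, (p i * q j - p j * q i) * (ε i - ε j) :=
    sum_pos' (fun i _ => sum_nonneg fun j _ => cross_nonneg i j)
      ⟨i₀, mem_univ _,
        sum_pos' (fun j _ => cross_nonneg i₀ j) ⟨j₀, mem_univ _, cross_pos i₀ j₀ hij₀⟩⟩
  rw [sum_sum_cross_mul_sub_eq] at hsum
  linarith

noncomputable def virtualInvTemp {ι : Type*} (p ε : ι → ℝ) (i j : ι) : ℝ :=
  log (p i / p j) / (ε j - ε i)

theorem virtualInvTemp_lt_iff {ι : Type*} {p ε : ι → ℝ} {i j : ι}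
    (hpi : 0 < p i) (hpj : 0 < p j) (hij : ε j < ε i) (β : ℝ) :
    virtualInvTemp p ε i j < β ↔ p j * exp (-β * ε i) < p i * exp (-β * ε j) := by
  rw [virtualInvTemp, div_lt_iff_of_neg (sub_neg.mpr hij), log_div hpi.ne' hpj.ne',
    ← exp_log hpi, ← exp_log hpj, ← exp_add, ← exp_add, exp_lt_exp, log_exp, log_exp]
  constructor <;> intro h <;> linarith

theorem lt_virtualInvTemp_iff {ι : Type*} {p ε : ι → ℝ} {i j : ι}
    (hpi : 0 < p i) (hpj : 0 < p j) (hij : ε j < ε i) (β : ℝ) :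
    β < virtualInvTemp p ε i j ↔ p i * exp (-β * ε j) < p j * exp (-β * ε i) := by
  rw [virtualInvTemp, lt_div_iff_of_neg (sub_neg.mpr hij), log_div hpi.ne' hpj.ne',
    ← exp_log hpi, ← exp_log hpj, ← exp_add, ← exp_add, exp_lt_exp, log_exp, log_exp]
  constructor <;> intro h <;> linarith

noncomputable def gibbsEnergy {ι : Type*} [Fintype ι] (ε : ι → ℝ) (β : ℝ) : ℝ :=
  (∑ i, ε i * exp (-β * ε i)) / ∑ i, exp (-β * ε i)

theorem sum_exp_neg_mul_pos {ι : Type*} [Fintype ι] [Nonempty ι] (ε : ι → ℝ) (β : ℝ) :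
    0 < ∑ i, exp (-β * ε i) :=
  sum_pos (fun _ _ => exp_pos _) univ_nonempty

section GibbsComparison

variable {ι : Type*} [Fintype ι] {p ε : ι → ℝ} {β : ℝ}

theorem gibbsEnergy_lt_of_virtualInvTemp_lt (hp : ∀ i, 0 < p i) (hpsum : ∑ i, p i = 1)
    (hε : ∃ i j, ε i ≠ ε j) (hβ : ∀ i j, ε i ≠ ε j → virtualInvTemp p ε i j < β) :
    gibbsEnergy ε β < ∑ i, ε i * p i := by
  have : Nonempty ι := ⟨hε.choose⟩
  rw [gibbsEnergy, div_lt_iff₀ (sum_exp_neg_mul_pos ε β)]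
  have := sum_mul_sum_lt_of_ratio_strictMono (q := fun i => exp (-β * ε i)) hε
    fun i j hij => (virtualInvTemp_lt_iff (hp i) (hp j) hij β).mp (hβ i j hij.ne')
  rwa [hpsum, one_mul] at this

theorem lt_gibbsEnergy_of_lt_virtualInvTemp (hp : ∀ i, 0 < p i) (hpsum : ∑ i, p i = 1)
    (hε : ∃ i j, ε i ≠ ε j) (hβ : ∀ i j, ε i ≠ ε j → β < virtualInvTemp p ε i j) :
    ∑ i, ε i * p i < gibbsEnergy ε β := by
  have : Nonempty ι := ⟨hε.choose⟩
  rw [gibbsEnergy, lt_div_iff₀ (sum_exp_neg_mul_pos ε β)]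
  have := sum_mul_sum_lt_of_ratio_strictMono (p := fun i => exp (-β * ε i)) (q := p) hε
    fun i j hij => by
      simpa only [mul_comm] using (lt_virtualInvTemp_iff (hp i) (hp j) hij β).mp (hβ i j hij.ne')
  rwa [hpsum, mul_one, mul_comm] at this

end GibbsComparison

/-- The inverse temperature `β*` of the Gibbs state with the same average energy as `p`
lies between the hot and cold effective inverse temperatures:
`β_h = inf {β_{ij}} ≤ β* ≤ sup {β_{ij}} = β_c`, where `β_{ij} = log(p_i/p_j)/(ε_j - ε_i)`
ranges over all pairs with `ε_i ≠ ε_j`. -/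
theorem beta_star_between_virtual_temperatures
    {d : ℕ} (ε : Fin d → ℝ) (hε : ∃ i j, ε i ≠ ε j)
    (p : Fin d → ℝ) (hp : ∀ i, 0 < p i) (hpsum : ∑ i, p i = 1)
    (E : ℝ) (hEdef : E = ∑ i, p i * ε i)
    (βstar : ℝ)
    (hβstar : (∑ i, ε i * Real.exp (-βstar * ε i)) /
      (∑ i, Real.exp (-βstar * ε i)) = E)
    (V : Set ℝ)
    (hV : V = {x | ∃ i j, i ≠ j ∧ ε i ≠ ε j ∧
      x = Real.log (p i / p j) / (ε j - ε i)}) :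
    sInf V ≤ βstar ∧ βstar ≤ sSup V := by
  have hVfin : V.Finite := hV ▸ (Set.finite_range fun ij : Fin d × Fin d =>
    virtualInvTemp p ε ij.1 ij.2).subset fun x ⟨i, j, _, _, hx⟩ => ⟨(i, j), hx.symm⟩
  have hmem : ∀ i j, ε i ≠ ε j → virtualInvTemp p ε i j ∈ V := fun i j hij =>
    hV ▸ ⟨i, j, fun h => hij (congrArg ε h), hij, rfl⟩
  have hE : gibbsEnergy ε βstar = ∑ i, ε i * p i := by
    rw [gibbsEnergy, hβstar, hEdef]
    simp only [mul_comm]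
  constructor
  · by_contra! h
    exact hE.not_gt (lt_gibbsEnergy_of_lt_virtualInvTemp hp hpsum hε fun i j hij =>
      h.trans_le (csInf_le hVfin.bddBelow (hmem i j hij)))
  · by_contra! h
    exact hE.not_lt (gibbsEnergy_lt_of_virtualInvTemp_lt hp hpsum hε fun i j hij =>
      (le_csSup hVfin.bddAbove (hmem i j hij)).trans_lt h)
end
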